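/- arXiv:1507.03189 — 3 statements merged into one kernel-verified Lean document; each statement's English description precedes it below -/
import Mathlib

section
/- For c = 1 and α = (π/2)² − 2, the dispersion function D(ζ) = −ζ² + 4 sin²(ζ/2) + α has exactly two real roots, namely ζ = π/2 and ζ = −π/2. -/
/-!
Since `4 sin²(ζ/2) = 2 - 2 cos ζ`, the equation `D ζ = 0` says `ζ² + 2 cos ζ = (π/2)² + 2 cos (π/2)`.
The function `x ↦ x² + 2 cos x` is even and strictly increasing on `[0, ∞)`, its derivative being
`2 (x - sin x) > 0`, so it takes each value at exactly one `|ζ|`.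
-/

open Real

lemma four_mul_sin_half_sq (x : ℝ) : 4 * sin (x / 2) ^ 2 = 2 - 2 * cos x := by
  have h := cos_sq (x / 2)
  rw [mul_div_cancel₀ x two_ne_zero] at h
  nlinarith [sin_sq_add_cos_sq (x / 2)]

lemma strictMonoOn_sq_add_two_mul_cos :
    StrictMonoOn (fun x : ℝ => x ^ 2 + 2 * cos x) (Set.Ici 0) := by
  refine strictMonoOn_of_hasDerivWithinAt_pos (convex_Ici 0) (by fun_prop)
    (fun x _ => ((hasDerivAt_pow 2 x).add ((hasDerivAt_cos x).const_mul 2)).hasDerivWithinAt)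
    fun x hx => ?_
  rw [interior_Ici] at hx
  have := sin_lt hx
  norm_num
  linarith

lemma sq_add_two_mul_cos_eq_iff {x y : ℝ} :
    x ^ 2 + 2 * cos x = y ^ 2 + 2 * cos y ↔ |x| = |y| := by
  rw [← sq_abs x, ← sq_abs y, ← cos_abs x, ← cos_abs y]
  exact strictMonoOn_sq_add_two_mul_cos.injOn.eq_iff (abs_nonneg x) (abs_nonneg y)

theorem stmt_0 (α : ℝ) (hα : α = (Real.pi / 2) ^ 2 - 2)
    (D : ℝ → ℝ) (hD : ∀ ζ, D ζ = -ζ ^ 2 + 4 * Real.sin (ζ / 2) ^ 2 + α) :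
    ∀ ζ : ℝ, D ζ = 0 ↔ ζ = Real.pi / 2 ∨ ζ = -(Real.pi / 2) := by
  intro ζ
  have hroot : D ζ = 0 ↔ ζ ^ 2 + 2 * cos ζ = (π / 2) ^ 2 + 2 * cos (π / 2) := by
    rw [hD, four_mul_sin_half_sq, hα, cos_pi_div_two]
    constructor <;> intro h <;> linarith
  rw [hroot, sq_add_two_mul_cos_eq_iff, abs_of_pos (by positivity : 0 < π / 2)]
  exact abs_eq (by positivity)
end

section
/- Let u₀ be an odd function in H²_loc(ℝ) such that for l = 0,1,2, x ↦ (1+x²)·(d^l/dx^l)(u₀(x) − sgn(x)cos(k₀x)) lies in L²(ℝ∖[−1,1]), with k₀ = π/2. Then ∫_ℝ sin(k₀x)·(c²u₀'' − Δ_D u₀ + α u₀) dx = −2c²k₀ + 2, where Δ_D u(x) = u(x+1) − 2u(x) + u(x−1). In particular this integral is negative when c² > 2/π. -/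
/-!
Let `W(z) = sin(k₀z)u₀'(z) - k₀cos(k₀z)u₀(z)` be the Wronskian of `sin(k₀·)` and `u₀`. Since
`α + 2 = c²k₀²`, the `u₀''` and `αu₀` terms integrate to `c²(W(z) - W(-z)) = 2c²W(z)`; since `k₀ = π/2`,
`sin(k₀x)u₀(x ± 1) = ∓h(x ± 1)` with `h = cos(k₀·)u₀`, so the shifted terms telescope to
`2∫_{z-1}^{z+1} h` by oddness of `h`. The weighted bounds put `v = u₀ - cos(k₀·)`, `v'` and `v''` in
`L²(1, ∞)`, hence `v, v' → 0` (for `f, f' ∈ L²` the derivative `2ff'` of `f²` is integrable). Therefore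
`W(z) → W[cos(k₀·)] = -k₀` and `∫_{z-1}^{z+1} h → ∫_{z-1}^{z+1} cos²(k₀x) dx = 1`.
-/

open MeasureTheory Set Filter Topology Real

theorem tendsto_atTop_zero_of_memLp_two {f f' : ℝ → ℝ} {a : ℝ}
    (hderiv : ∀ x ∈ Ioi a, HasDerivAt f (f' x) x)
    (hf : MemLp f 2 (volume.restrict (Ioi a))) (hf' : MemLp f' 2 (volume.restrict (Ioi a))) :
    Tendsto f atTop (𝓝 0) := by
  have hsq : Tendsto (fun x => f x ^ 2) atTop (𝓝 0) := by
    refine tendsto_zero_of_hasDerivAt_of_integrableOn_Ioi (f' := fun x => 2 * f x * f' x)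
      (fun x hx => ?_) ?_ hf.integrable_sq
    · simpa [mul_comm, mul_left_comm] using (hderiv x hx).fun_pow 2
    · simpa [IntegrableOn, mul_assoc] using (hf.integrable_mul hf').const_mul 2
  rw [tendsto_zero_iff_abs_tendsto_zero]
  simpa [Function.comp_def, Real.sqrt_sq_eq_abs] using hsq.sqrt

theorem memLp_of_one_add_sq_mul {f : ℝ → ℝ} {p : ENNReal} {μ : Measure ℝ}
    (hf : AEStronglyMeasurable f μ) (h : MemLp (fun x => (1 + x ^ 2) * f x) p μ) :
    MemLp f p μ :=
  h.mono hf <| ae_of_all _ fun x => by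
    rw [norm_mul, Real.norm_of_nonneg (by positivity : (0 : ℝ) ≤ 1 + x ^ 2)]
    exact le_mul_of_one_le_left (norm_nonneg _) (by nlinarith [sq_nonneg x])

theorem memLp_iteratedDeriv_sub_Ioi_one {u g : ℝ → ℝ} {p : ENNReal} (l : ℕ)
    (hc : Continuous (iteratedDeriv l fun y => u y - g y))
    (h : MemLp (fun x => (1 + x ^ 2) * iteratedDeriv l (fun y => u y - sign y * g y) x) p
      (volume.restrict {x : ℝ | 1 ≤ |x|})) :
    MemLp (iteratedDeriv l fun y => u y - g y) p (volume.restrict (Ioi 1)) := by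
  refine memLp_of_one_add_sq_mul hc.aestronglyMeasurable ?_
  refine (h.mono_measure (Measure.restrict_mono (fun x (hx : 1 < x) => ?_) le_rfl)).ae_eq ?_
  · exact (le_abs_self x).trans' hx.le
  · refine ae_restrict_of_forall_mem measurableSet_Ioi fun x (hx : 1 < x) => ?_
    have hsign : (fun y => u y - sign y * g y) =ᶠ[𝓝 x] fun y => u y - g y :=
      eventually_of_mem (Ioi_mem_nhds hx) fun y hy => by
        simp [Real.sign_of_pos (zero_lt_one.trans hy)]
    simp only [hsign.iteratedDeriv_eq]

noncomputable def sinWronskian (k : ℝ) (u : ℝ → ℝ) (z : ℝ) : ℝ :=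
  sin (k * z) * deriv u z - k * cos (k * z) * u z

section sinWronskian

variable {k : ℝ} {u : ℝ → ℝ}

theorem hasDerivAt_sinWronskian (hu : ContDiff ℝ 2 u) (x : ℝ) :
    HasDerivAt (sinWronskian k u) (sin (k * x) * (deriv (deriv u) x + k ^ 2 * u x)) x := by
  have hkx : HasDerivAt (fun y => k * y) k x := by simpa using (hasDerivAt_id x).const_mul k
  have hu1 : ContDiff ℝ 1 (deriv u) := hu.deriv'
  refine ((hkx.sin.fun_mul (hu1.differentiable one_ne_zero x).hasDerivAt).fun_sub
    ((hkx.cos.const_mul k).fun_mul (hu.differentiable two_ne_zero x).hasDerivAt)).congr_deriv ?_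
  ring

theorem integral_sin_mul_deriv_deriv_add (hu : ContDiff ℝ 2 u) (a b : ℝ) :
    ∫ x in a..b, sin (k * x) * (deriv (deriv u) x + k ^ 2 * u x)
      = sinWronskian k u b - sinWronskian k u a := by
  have hu2 : Continuous (deriv (deriv u)) := hu.deriv'.continuous_deriv le_rfl
  exact intervalIntegral.integral_eq_sub_of_hasDerivAt (fun x _ => hasDerivAt_sinWronskian hu x)
    (Continuous.intervalIntegrable (by fun_prop (disch := exact hu.continuous)) a b)

theorem sinWronskian_neg_of_odd (hodd : ∀ x, u (-x) = -u x) (z : ℝ) :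
    sinWronskian k u (-z) = -sinWronskian k u z := by
  have hderiv : deriv u (-z) = deriv u z := by
    simpa [hodd] using (deriv_comp_neg u z).symm
  simp only [sinWronskian, mul_neg, sin_neg, cos_neg, hderiv, hodd]
  ring

theorem sinWronskian_sub {w : ℝ → ℝ} {z : ℝ} (hu : DifferentiableAt ℝ u z)
    (hw : DifferentiableAt ℝ w z) :
    sinWronskian k (fun x => u x - w x) z = sinWronskian k u z - sinWronskian k w z := by
  simp only [sinWronskian, deriv_fun_sub hu hw]
  ring

theorem sinWronskian_cos (z : ℝ) : sinWronskian k (fun x => cos (k * x)) z = -k := by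
  have hderiv : deriv (fun x => cos (k * x)) z = -sin (k * z) * k := by
    simpa using ((hasDerivAt_id z).const_mul k).cos.deriv
  simp only [sinWronskian, hderiv]
  linear_combination (-k) * sin_sq_add_cos_sq (k * z)

theorem tendsto_sinWronskian_zero (hu : Tendsto u atTop (𝓝 0))
    (hu' : Tendsto (deriv u) atTop (𝓝 0)) : Tendsto (sinWronskian k u) atTop (𝓝 0) := by
  refine squeeze_zero_norm (fun z => ?_) (by simpa using hu'.norm.add (hu.norm.const_mul ‖k‖))
  calc ‖sinWronskian k u z‖
      ≤ ‖sin (k * z)‖ * ‖deriv u z‖ + ‖k‖ * ‖cos (k * z)‖ * ‖u z‖ := by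
        simpa only [sinWronskian, norm_mul] using
          norm_sub_le (sin (k * z) * deriv u z) (k * cos (k * z) * u z)
    _ ≤ 1 * ‖deriv u z‖ + ‖k‖ * 1 * ‖u z‖ := by
        gcongr
        · exact abs_sin_le_one _
        · exact abs_cos_le_one _
    _ = ‖deriv u z‖ + ‖k‖ * ‖u z‖ := by ring

theorem tendsto_sinWronskian_of_tendsto_sub_cos (hu : Differentiable ℝ u)
    (hv : Tendsto (fun x => u x - cos (k * x)) atTop (𝓝 0))
    (hv' : Tendsto (deriv fun x => u x - cos (k * x)) atTop (𝓝 0)) :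
    Tendsto (sinWronskian k u) atTop (𝓝 (-k)) := by
  have h := (tendsto_sinWronskian_zero (k := k) hv hv').add_const (-k)
  rw [zero_add] at h
  refine h.congr fun z => ?_
  rw [sinWronskian_sub (hu z) (by fun_prop), sinWronskian_cos]
  ring

end sinWronskian

theorem integral_comp_add_sub_comp_sub {h : ℝ → ℝ} (hh : Continuous h) (a b t : ℝ) :
    ∫ x in a..b, (h (x + t) - h (x - t))
      = (∫ x in b - t..b + t, h x) - ∫ x in a - t..a + t, h x := by
  have hplus : Continuous fun x => h (x + t) := hh.comp (continuous_add_const t)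
  have hminus : Continuous fun x => h (x - t) := hh.comp (continuous_sub_right t)
  rw [intervalIntegral.integral_sub (hplus.intervalIntegrable _ _) (hminus.intervalIntegrable _ _),
    intervalIntegral.integral_comp_add_right, intervalIntegral.integral_comp_sub_right,
    intervalIntegral.integral_interval_sub_interval_comm (hh.intervalIntegrable _ _)
      (hh.intervalIntegrable _ _) (hh.intervalIntegrable _ _),
    intervalIntegral.integral_symm (a + t), intervalIntegral.integral_symm (b + t)]
  ring

theorem integral_comp_add_sub_comp_sub_of_odd {h : ℝ → ℝ} (hh : Continuous h)
    (hodd : ∀ x, h (-x) = -h x) (z t : ℝ) :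
    ∫ x in -z..z, (h (x + t) - h (x - t)) = 2 * ∫ x in z - t..z + t, h x := by
  have hneg : ∫ x in -z - t..-z + t, h x = -∫ x in z - t..z + t, h x := by
    simp_rw [← intervalIntegral.integral_neg, ← hodd]
    rw [intervalIntegral.integral_comp_neg]
    congr 1 <;> ring
  rw [integral_comp_add_sub_comp_sub hh, hneg]
  ring

theorem integral_cos_pi_div_two_mul_sq (z : ℝ) :
    ∫ x in z - 1..z + 1, cos (π / 2 * x) ^ 2 = 1 := by
  rw [intervalIntegral.integral_comp_mul_left (fun x => cos x ^ 2) (by positivity),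
    integral_cos_sq, mul_add, mul_sub, mul_one, cos_add_pi_div_two, sin_add_pi_div_two,
    cos_sub_pi_div_two, sin_sub_pi_div_two, smul_eq_mul]
  field_simp
  ring

theorem tendsto_integral_add_of_tendsto_zero {f : ℝ → ℝ} (hf : Tendsto f atTop (𝓝 0))
    (a b : ℝ) : Tendsto (fun z => ∫ x in z + a..z + b, f x) atTop (𝓝 0) := by
  rw [Metric.tendsto_atTop]
  intro ε hε
  obtain ⟨M, hM⟩ := Metric.tendsto_atTop.1 hf (ε / (|b - a| + 1)) (by positivity)
  refine ⟨M - min a b, fun z hz => ?_⟩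
  have hbound : ∀ x ∈ uIoc (z + a) (z + b), ‖f x‖ ≤ ε / (|b - a| + 1) := fun x hx => by
    have hMx : M ≤ x := by
      have := hx.1
      rw [min_add_add_left] at this
      linarith
    simpa using (hM x hMx).le
  rw [dist_zero_right]
  calc ‖∫ x in z + a..z + b, f x‖ ≤ ε / (|b - a| + 1) * |z + b - (z + a)| :=
        intervalIntegral.norm_integral_le_of_norm_le_const hbound
    _ = ε * (|b - a| / (|b - a| + 1)) := by rw [add_sub_add_left_eq_sub]; ring
    _ < ε := mul_lt_of_lt_one_right hε ((div_lt_one (by positivity)).2 (lt_add_one _))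

theorem tendsto_integral_cos_pi_div_two_mul {u : ℝ → ℝ} (hu : Continuous u)
    (hv : Tendsto (fun x => u x - cos (π / 2 * x)) atTop (𝓝 0)) :
    Tendsto (fun z => ∫ x in z - 1..z + 1, cos (π / 2 * x) * u x) atTop (𝓝 1) := by
  have hcos : Tendsto (fun x => cos (π / 2 * x) * (u x - cos (π / 2 * x))) atTop (𝓝 0) := by
    refine squeeze_zero_norm (fun x => ?_) (by simpa using hv.norm)
    rw [norm_mul, norm_eq_abs (cos _)]
    exact mul_le_of_le_one_left (norm_nonneg _) (abs_cos_le_one _)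
  have h := (tendsto_integral_add_of_tendsto_zero hcos (-1) 1).const_add 1
  rw [add_zero] at h
  refine h.congr fun z => ?_
  have hsplit : ∫ x in z - 1..z + 1, cos (π / 2 * x) * u x
      = (∫ x in z - 1..z + 1, cos (π / 2 * x) ^ 2)
        + ∫ x in z - 1..z + 1, cos (π / 2 * x) * (u x - cos (π / 2 * x)) := by
    rw [← intervalIntegral.integral_add (Continuous.intervalIntegrable (by fun_prop) _ _)
      (Continuous.intervalIntegrable (by fun_prop) _ _)]
    congr 1 with x
    ring
  rw [hsplit, integral_cos_pi_div_two_mul_sq, sub_eq_add_neg]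

theorem integral_sin_mul_eq_sinWronskian_add {c k α : ℝ} (hk : k = π / 2)
    (hα : α = c ^ 2 * k ^ 2 - 2) {u : ℝ → ℝ} (hu : ContDiff ℝ 2 u) (hodd : ∀ x, u (-x) = -u x)
    (z : ℝ) :
    ∫ x in -z..z, sin (k * x) *
        (c ^ 2 * deriv (deriv u) x - (u (x + 1) - 2 * u x + u (x - 1)) + α * u x)
      = 2 * c ^ 2 * sinWronskian k u z + 2 * ∫ x in z - 1..z + 1, cos (k * x) * u x := by
  subst hk hα
  set h : ℝ → ℝ := fun y => cos (π / 2 * y) * u y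
  have hh : Continuous h := by fun_prop (disch := exact hu.continuous)
  have hhodd : ∀ x, h (-x) = -h x := fun x => by simp [h, hodd]
  have hpoint : ∀ x, sin (π / 2 * x) * (c ^ 2 * deriv (deriv u) x
        - (u (x + 1) - 2 * u x + u (x - 1)) + (c ^ 2 * (π / 2) ^ 2 - 2) * u x)
      = c ^ 2 * (sin (π / 2 * x) * (deriv (deriv u) x + (π / 2) ^ 2 * u x))
        + (h (x + 1) - h (x - 1)) := fun x => by
    simp only [h, mul_add, mul_sub, mul_one, cos_add_pi_div_two, cos_sub_pi_div_two]
    ring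
  have hcont : Continuous fun x => sin (π / 2 * x) * (deriv (deriv u) x + (π / 2) ^ 2 * u x) := by
    fun_prop (disch := first | exact hu.continuous | exact hu.deriv'.continuous_deriv le_rfl)
  have hshift : Continuous fun x => h (x + 1) - h (x - 1) :=
    (hh.comp (continuous_add_const 1)).sub (hh.comp (continuous_sub_right 1))
  rw [intervalIntegral.integral_congr fun x _ => hpoint x, intervalIntegral.integral_add
    ((hcont.intervalIntegrable _ _).const_mul _) (hshift.intervalIntegrable _ _),
    intervalIntegral.integral_const_mul, integral_sin_mul_deriv_deriv_add hu,
    sinWronskian_neg_of_odd hodd, integral_comp_add_sub_comp_sub_of_odd hh hhodd]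
  ring

theorem stmt_9 (c k₀ α : ℝ) (hk₀ : k₀ = Real.pi / 2) (hα : α = c ^ 2 * k₀ ^ 2 - 2)
    (u₀ : ℝ → ℝ) (hu₀ : ContDiff ℝ 2 u₀) (hodd : ∀ x, u₀ (-x) = -u₀ x)
    (hdecay : ∀ l : ℕ, l ≤ 2 →
      MemLp (fun x => (1 + x ^ 2) *
          iteratedDeriv l (fun y => u₀ y - Real.sign y * Real.cos (k₀ * y)) x) 2
        (volume.restrict {x : ℝ | 1 ≤ |x|})) :
    Filter.Tendsto
      (fun z : ℝ => ∫ x in (-z)..z, Real.sin (k₀ * x) *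
        (c ^ 2 * deriv (deriv u₀) x - (u₀ (x + 1) - 2 * u₀ x + u₀ (x - 1)) + α * u₀ x))
      Filter.atTop (nhds (-2 * c ^ 2 * k₀ + 2)) ∧
    (2 / Real.pi < c ^ 2 → -2 * c ^ 2 * k₀ + 2 < 0) := by
  refine ⟨?_, fun hc => ?_⟩
  · set v : ℝ → ℝ := fun y => u₀ y - cos (k₀ * y)
    have hv : ContDiff ℝ 2 v := hu₀.sub (by fun_prop)
    have hL2 : ∀ l ≤ 2, MemLp (iteratedDeriv l v) 2 (volume.restrict (Ioi 1)) := fun l hl =>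
      memLp_iteratedDeriv_sub_Ioi_one l (hv.continuous_iteratedDeriv l (by exact_mod_cast hl))
        (hdecay l hl)
    have hv0 : Tendsto v atTop (𝓝 0) :=
      tendsto_atTop_zero_of_memLp_two (fun x _ => (hv.differentiable two_ne_zero x).hasDerivAt)
        (by simpa using hL2 0 (by norm_num)) (by simpa using hL2 1 (by norm_num))
    have hv1 : Tendsto (deriv v) atTop (𝓝 0) :=
      tendsto_atTop_zero_of_memLp_two
        (fun x _ => (hv.deriv'.differentiable one_ne_zero x).hasDerivAt)
        (by simpa using hL2 1 (by norm_num)) (by simpa [iteratedDeriv_succ] using hL2 2 le_rfl)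
    have hlim := ((tendsto_sinWronskian_of_tendsto_sub_cos (hu₀.differentiable two_ne_zero)
        hv0 hv1).const_mul (2 * c ^ 2)).add
      ((tendsto_integral_cos_pi_div_two_mul hu₀.continuous (hk₀ ▸ hv0)).const_mul 2)
    rw [show 2 * c ^ 2 * -k₀ + 2 * 1 = -2 * c ^ 2 * k₀ + 2 by ring] at hlim
    refine hlim.congr fun z => ?_
    rw [integral_sin_mul_eq_sinWronskian_add hk₀ hα hu₀ hodd, hk₀]
  · rw [div_lt_iff₀ pi_pos] at hc
    rw [hk₀]
    nlinarith
end

section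
/- Let u_e be an even function in H²_loc(ℝ) such that for l = 0,1,2, x ↦ (1+x²)·(d^l/dx^l)(u_e(x) − sgn(x)sin(k₀x)) lies in L²(ℝ∖[−1,1]), with k₀ = π/2. Then ∫_ℝ cos(k₀x)·(c²u_e'' − Δ_D u_e + α u_e) dx = 2c²k₀ − 2. -/
/-!
Multiply `L u` by `cos (k₀ x)` and integrate over `[-z, z]`. Since `cos (k₀ ·)` lies in the kernel
of `L`, only boundary terms survive: the Wronskian of `cos (k₀ ·)` and `u` at `±z` from the second
derivative, and, because `sin (k₀ (x ± 1)) = ± cos (k₀ x)` and `u` is even, the window integral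
`∫ y in z-1..z+1, sin (k₀ y) u y` from the difference operator. On `x > 0` write
`u = sin (k₀ ·) + v`. The boundary term of `sin (k₀ ·)` is exactly `2 c² k₀ - 2`, and the weighted
`L²` bounds on `v, v', v''` make `v`, `v'` and the windows of `|v|` tend to `0`.
-/

open MeasureTheory Set Filter Topology Real

/- The weight `1 + x ^ 2` turns square integrability into decay: by AM-GM,
`(1 + z ^ 2) |w y| ≤ |(1 + y ^ 2) w y| ≤ (1 + ((1 + y ^ 2) w y) ^ 2) / 2` for `y ≥ z ≥ 0`. -/
lemma tendsto_integral_abs_of_memLp_weighted {w : ℝ → ℝ} (hw : Continuous w)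
    (h : MemLp (fun x => (1 + x ^ 2) * w x) 2 (volume.restrict (Ici 1))) :
    Tendsto (fun z => ∫ y in z..z + 1, |w y|) atTop (𝓝 0) := by
  set g : ℝ → ℝ := fun x => (1 + x ^ 2) * w x
  have hg : Continuous g := by fun_prop
  have hg2 : IntegrableOn (fun x => g x ^ 2) (Ici 1) :=
    (memLp_two_iff_integrable_sq hg.aestronglyMeasurable).mp h
  set C := 1 + ∫ x in Ici (1 : ℝ), g x ^ 2
  have hbound : ∀ z, 1 ≤ z → ∫ y in z..z + 1, |w y| ≤ C / (2 * (1 + z ^ 2)) := by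
    intro z hz
    have hpt : ∀ y ∈ Icc z (z + 1), |w y| ≤ (1 + g y ^ 2) / (2 * (1 + z ^ 2)) := by
      intro y hy
      have hweight : (1 + z ^ 2) * |w y| ≤ |g y| := by
        rw [abs_mul, abs_of_pos (by positivity : (0 : ℝ) < 1 + y ^ 2)]
        gcongr
        nlinarith [hy.1]
      rw [le_div_iff₀ (by positivity)]
      nlinarith [sq_nonneg (|g y| - 1), sq_abs (g y)]
    have htail : ∫ y in z..z + 1, g y ^ 2 ≤ ∫ x in Ici 1, g x ^ 2 := by
      rw [intervalIntegral.integral_of_le (by linarith)]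
      exact setIntegral_mono_set hg2 (ae_of_all _ fun x => sq_nonneg _)
        (Ioc_subset_Ioi_self.trans (Ioi_subset_Ici_self.trans (Ici_subset_Ici.2 hz))).eventuallyLE
    calc ∫ y in z..z + 1, |w y|
        ≤ ∫ y in z..z + 1, (1 + g y ^ 2) / (2 * (1 + z ^ 2)) :=
          intervalIntegral.integral_mono_on (by linarith) (hw.abs.intervalIntegrable _ _)
            (Continuous.intervalIntegrable (by fun_prop) _ _) hpt
      _ = (1 + ∫ y in z..z + 1, g y ^ 2) / (2 * (1 + z ^ 2)) := by
          rw [intervalIntegral.integral_div,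
            intervalIntegral.integral_add intervalIntegrable_const
              ((by fun_prop : Continuous fun y => g y ^ 2).intervalIntegrable _ _)]
          simp
      _ ≤ C / (2 * (1 + z ^ 2)) := by
          gcongr
          exact add_le_add_right htail 1
  have hC : Tendsto (fun z : ℝ => C / (2 * (1 + z ^ 2))) atTop (𝓝 0) :=
    tendsto_const_nhds.div_atTop <| (tendsto_atTop_add_const_left _ 1
      (tendsto_pow_atTop two_ne_zero)).const_mul_atTop two_pos
  refine squeeze_zero' (Eventually.of_forall fun z => ?_) ((eventually_ge_atTop 1).mono hbound) hC
  exact intervalIntegral.integral_nonneg (by linarith) fun y _ => abs_nonneg _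

lemma abs_le_integral_abs_add_integral_abs_deriv {w : ℝ → ℝ} (hw : ContDiff ℝ 1 w) (z : ℝ) :
    |w z| ≤ (∫ y in z..z + 1, |w y|) + ∫ y in z..z + 1, |deriv w y| := by
  have hd : Differentiable ℝ w := hw.differentiable one_ne_zero
  have hd' : Continuous (deriv w) := hw.continuous_deriv le_rfl
  set K := ∫ y in z..z + 1, |deriv w y|
  have hK : ∀ t ∈ Icc z (z + 1), |w z| ≤ |w t| + K := by
    intro t ht
    have hftc : w t - w z = ∫ y in z..t, deriv w y :=
      (intervalIntegral.integral_deriv_eq_sub (fun y _ => hd y) (hd'.intervalIntegrable _ _)).symm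
    have hvar : |w t - w z| ≤ K := by
      rw [hftc]
      exact (intervalIntegral.abs_integral_le_integral_abs ht.1).trans
        (intervalIntegral.integral_mono_interval le_rfl ht.1 ht.2
          (ae_of_all _ fun _ => abs_nonneg _) (hd'.abs.intervalIntegrable _ _))
    linarith [abs_sub_abs_le_abs_sub (w z) (w t), abs_sub_comm (w z) (w t)]
  calc |w z| = ∫ _ in z..z + 1, |w z| := by simp
    _ ≤ ∫ t in z..z + 1, (|w t| + K) :=
        intervalIntegral.integral_mono_on (by linarith) intervalIntegrable_const
          ((hd.continuous.abs.add continuous_const).intervalIntegrable _ _) hK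
    _ = (∫ y in z..z + 1, |w y|) + K := by
        rw [intervalIntegral.integral_add (hd.continuous.abs.intervalIntegrable _ _)
          intervalIntegrable_const]
        simp

lemma tendsto_zero_of_memLp_weighted {w : ℝ → ℝ} (hw : ContDiff ℝ 1 w)
    (h₀ : MemLp (fun x => (1 + x ^ 2) * w x) 2 (volume.restrict (Ici 1)))
    (h₁ : MemLp (fun x => (1 + x ^ 2) * deriv w x) 2 (volume.restrict (Ici 1))) :
    Tendsto w atTop (𝓝 0) := by
  have hsum := (tendsto_integral_abs_of_memLp_weighted hw.continuous h₀).add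
    (tendsto_integral_abs_of_memLp_weighted (hw.continuous_deriv le_rfl) h₁)
  rw [add_zero] at hsum
  exact squeeze_zero_norm (fun z => abs_le_integral_abs_add_integral_abs_deriv hw z) hsum

lemma memLp_weighted_iteratedDeriv_Ici {f g : ℝ → ℝ} (hfg : EqOn f g (Ioi 0)) (l : ℕ)
    (hf : MemLp (fun x => (1 + x ^ 2) * iteratedDeriv l f x) 2
      (volume.restrict {x : ℝ | 1 ≤ |x|})) :
    MemLp (fun x => (1 + x ^ 2) * iteratedDeriv l g x) 2 (volume.restrict (Ici 1)) := by
  refine (hf.mono_measure (Measure.restrict_mono (fun x hx => le_trans hx (le_abs_self x))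
    le_rfl)).ae_eq ?_
  filter_upwards [ae_restrict_mem measurableSet_Ici] with x hx
  rw [hfg.iteratedDeriv_of_isOpen isOpen_Ioi l (zero_lt_one.trans_le (mem_Ici.mp hx))]

lemma Function.Odd.intervalIntegral_neg {f : ℝ → ℝ} (hf : f.Odd) (a b : ℝ) :
    ∫ x in (-b)..(-a), f x = -∫ x in a..b, f x := by
  rw [← intervalIntegral.integral_comp_neg, ← intervalIntegral.integral_neg]
  exact intervalIntegral.integral_congr fun x _ => hf x

lemma Function.Odd.intervalIntegral_eq_zero {f : ℝ → ℝ} (hf : f.Odd) (a : ℝ) :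
    ∫ x in (-a)..a, f x = 0 := by
  have h := hf.intervalIntegral_neg (-a) a
  rw [neg_neg] at h
  linarith

lemma Function.Even.deriv {u : ℝ → ℝ} (hu : u.Even) : (deriv u).Odd := by
  intro x
  have h := deriv_comp_neg (f := u) (x := -x)
  rw [show (fun x => u (-x)) = u from funext hu, neg_neg] at h
  exact h

lemma integral_cos_mul_deriv_deriv_add (k : ℝ) {u : ℝ → ℝ} (hu : ContDiff ℝ 2 u) (a b : ℝ) :
    ∫ x in a..b, cos (k * x) * (deriv (deriv u) x + k ^ 2 * u x) =
      (cos (k * b) * deriv u b + k * sin (k * b) * u b) -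
        (cos (k * a) * deriv u a + k * sin (k * a) * u a) := by
  have hu' : ContDiff ℝ 1 (deriv u) := hu.deriv'
  refine intervalIntegral.integral_eq_sub_of_hasDerivAt
    (f := fun x => cos (k * x) * deriv u x + k * sin (k * x) * u x) (fun x _ => ?_)
    (Continuous.intervalIntegrable (by
      have := hu.continuous; have := hu'.continuous_deriv le_rfl; fun_prop :
        Continuous fun x => cos (k * x) * (deriv (deriv u) x + k ^ 2 * u x)) _ _)
  have hkx : HasDerivAt (fun x => k * x) k x := by simpa using (hasDerivAt_id x).const_mul k
  have h₀ : HasDerivAt u (deriv u x) x := (hu.differentiable two_ne_zero x).hasDerivAt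
  have h₁ : HasDerivAt (deriv u) (deriv (deriv u) x) x :=
    (hu'.differentiable one_ne_zero x).hasDerivAt
  convert (hkx.cos.fun_mul h₁).fun_add ((hkx.sin.const_mul k).fun_mul h₀) using 1
  ring

lemma integral_cos_mul_shift_add_shift {k : ℝ} (hcos : cos k = 0) (hsin : sin k = 1)
    {u : ℝ → ℝ} (hu : Continuous u) (heven : u.Even) (z : ℝ) :
    ∫ x in (-z)..z, cos (k * x) * (u (x + 1) + u (x - 1)) =
      2 * ∫ y in (z - 1)..(z + 1), sin (k * y) * u y := by
  set S : ℝ → ℝ := fun y => sin (k * y) * u y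
  have hS : Continuous S := by fun_prop
  have hodd : S.Odd := fun y => by simp only [S, mul_neg, sin_neg, heven y, neg_mul]
  -- `sin (k (x ± 1)) = ± cos (k x)` turns the two shifts into shifts of `S`.
  have hshift : ∀ x, cos (k * x) * (u (x + 1) + u (x - 1)) = S (x + 1) - S (x - 1) := by
    intro x
    simp only [S, mul_add, mul_sub, mul_one, sin_add, sin_sub, hcos, hsin]
    ring
  rw [intervalIntegral.integral_congr fun x _ => hshift x,
    intervalIntegral.integral_sub
      ((by fun_prop : Continuous fun x => S (x + 1)).intervalIntegrable _ _)
      ((by fun_prop : Continuous fun x => S (x - 1)).intervalIntegrable _ _),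
    intervalIntegral.integral_comp_add_right S, intervalIntegral.integral_comp_sub_right S]
  have hleft : ∫ y in (-z - 1)..(z - 1), S y = -∫ y in (-z + 1)..(z + 1), S y := by
    convert hodd.intervalIntegral_neg (-z + 1) (z + 1) using 2 <;> ring
  have hmid : ∫ y in (-z + 1)..(z - 1), S y = 0 := by
    convert hodd.intervalIntegral_eq_zero (z - 1) using 2; ring
  have hadj := intervalIntegral.integral_add_adjacent_intervals
    (hS.intervalIntegrable (μ := volume) (-z + 1) (z - 1)) (hS.intervalIntegrable (z - 1) (z + 1))
  linarith

/-- The boundary term of `∫ x in -z..z, cos (k x) * (L u) x` for even `u`. -/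
noncomputable def flux (c k : ℝ) (u : ℝ → ℝ) (z : ℝ) : ℝ :=
  2 * c ^ 2 * (cos (k * z) * deriv u z + k * sin (k * z) * u z) -
    2 * ∫ y in (z - 1)..(z + 1), sin (k * y) * u y

lemma integral_cos_mul_eq_flux {k : ℝ} (hcos : cos k = 0) (hsin : sin k = 1) (c : ℝ)
    {u : ℝ → ℝ} (hu : ContDiff ℝ 2 u) (heven : u.Even) (z : ℝ) :
    ∫ x in (-z)..z, cos (k * x) * (c ^ 2 * deriv (deriv u) x -
        (u (x + 1) - 2 * u x + u (x - 1)) + (c ^ 2 * k ^ 2 - 2) * u x) = flux c k u z := by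
  have hu' : Continuous (deriv (deriv u)) := hu.deriv'.continuous_deriv le_rfl
  have hsplit : ∀ x, cos (k * x) *
      (c ^ 2 * deriv (deriv u) x - (u (x + 1) - 2 * u x + u (x - 1)) + (c ^ 2 * k ^ 2 - 2) * u x) =
      c ^ 2 * (cos (k * x) * (deriv (deriv u) x + k ^ 2 * u x)) -
        cos (k * x) * (u (x + 1) + u (x - 1)) := fun x => by ring
  have hc := hu.continuous
  rw [intervalIntegral.integral_congr fun x _ => hsplit x,
    intervalIntegral.integral_sub (Continuous.intervalIntegrable (by fun_prop) _ _)
      (Continuous.intervalIntegrable (by fun_prop) _ _),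
    intervalIntegral.integral_const_mul, integral_cos_mul_deriv_deriv_add k hu,
    integral_cos_mul_shift_add_shift hcos hsin hc heven, mul_neg, cos_neg, sin_neg,
    heven.deriv z, heven z, flux]
  ring

lemma flux_add (c k : ℝ) {u w : ℝ → ℝ} (hu : Differentiable ℝ u) (hw : Differentiable ℝ w)
    (z : ℝ) : flux c k (u + w) z = flux c k u z + flux c k w z := by
  have hsu : Continuous fun y => sin (k * y) * u y := by have := hu.continuous; fun_prop
  have hsw : Continuous fun y => sin (k * y) * w y := by have := hw.continuous; fun_prop
  simp only [flux, deriv_add (hu z) (hw z), Pi.add_apply, mul_add]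
  rw [intervalIntegral.integral_add (hsu.intervalIntegrable _ _) (hsw.intervalIntegrable _ _)]
  ring

lemma flux_sin_half_pi (c z : ℝ) :
    flux c (π / 2) (fun y => sin (π / 2 * y)) z = 2 * c ^ 2 * (π / 2) - 2 := by
  have hderiv : deriv (fun y => sin (π / 2 * y)) z = cos (π / 2 * z) * (π / 2) := by
    simpa using ((hasDerivAt_id z).const_mul (π / 2)).sin.deriv
  have hint : ∫ y in (z - 1)..(z + 1), sin (π / 2 * y) * sin (π / 2 * y) = 1 := by
    simp_rw [← sq]
    rw [intervalIntegral.integral_comp_mul_left (fun x => sin x ^ 2) (by positivity),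
      integral_sin_sq, mul_sub, mul_add, mul_one, sin_sub_pi_div_two, cos_sub_pi_div_two,
      sin_add_pi_div_two, cos_add_pi_div_two, smul_eq_mul]
    field_simp [pi_ne_zero]
    ring
  rw [flux, hderiv, hint]
  linear_combination 2 * c ^ 2 * (π / 2) * sin_sq_add_cos_sq (π / 2 * z)

lemma tendsto_flux_zero (c k : ℝ) {v : ℝ → ℝ} (hv : Continuous v)
    (h₀ : Tendsto v atTop (𝓝 0)) (h₁ : Tendsto (deriv v) atTop (𝓝 0))
    (hwin : Tendsto (fun z => ∫ y in z..z + 1, |v y|) atTop (𝓝 0)) :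
    Tendsto (flux c k v) atTop (𝓝 0) := by
  have hsplit : ∀ z, ∫ y in (z - 1)..(z + 1), |v y| =
      (∫ y in (z - 1)..(z - 1 + 1), |v y|) + ∫ y in z..z + 1, |v y| := fun z => by
    rw [sub_add_cancel, intervalIntegral.integral_add_adjacent_intervals
      (hv.abs.intervalIntegrable _ _) (hv.abs.intervalIntegrable _ _)]
  have hbound : ∀ z, ‖flux c k v z‖ ≤ 2 * c ^ 2 * (|deriv v z| + |k| * |v z|) +
      2 * ((∫ y in (z - 1)..(z - 1 + 1), |v y|) + ∫ y in z..z + 1, |v y|) := by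
    intro z
    have hint : |∫ y in (z - 1)..(z + 1), sin (k * y) * v y| ≤ ∫ y in (z - 1)..(z + 1), |v y| :=
      intervalIntegral.abs_integral_le_integral_abs (by linarith) |>.trans <|
        intervalIntegral.integral_mono_on (by linarith)
          (Continuous.intervalIntegrable (by fun_prop) _ _)
          (hv.abs.intervalIntegrable _ _) fun y _ => by
            rw [abs_mul]; exact mul_le_of_le_one_left (abs_nonneg _) (abs_sin_le_one _)
    have hbdry : |cos (k * z) * deriv v z + k * sin (k * z) * v z| ≤ |deriv v z| + |k| * |v z| := by
      refine (abs_add_le _ _).trans (add_le_add ?_ ?_)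
      · rw [abs_mul]; exact mul_le_of_le_one_left (abs_nonneg _) (abs_cos_le_one _)
      · rw [abs_mul, abs_mul, mul_assoc]
        gcongr
        exact mul_le_of_le_one_left (abs_nonneg _) (abs_sin_le_one _)
    rw [Real.norm_eq_abs, flux, ← hsplit]
    refine (abs_sub _ _).trans (add_le_add ?_ ?_)
    · rw [abs_mul, abs_of_nonneg (by positivity)]; gcongr
    · rw [abs_mul, abs_two]; gcongr
  refine squeeze_zero_norm hbound ?_
  have hshift := hwin.comp (tendsto_atTop_add_const_right atTop (-1) tendsto_id)
  simpa [sub_eq_add_neg] using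
    ((h₁.abs.add (h₀.abs.const_mul |k|)).const_mul (2 * c ^ 2)).add ((hshift.add hwin).const_mul 2)

theorem stmt_10 (c k₀ α : ℝ) (hk₀ : k₀ = Real.pi / 2) (hα : α = c ^ 2 * k₀ ^ 2 - 2)
    (ue : ℝ → ℝ) (hue : ContDiff ℝ 2 ue) (heven : ∀ x, ue (-x) = ue x)
    (hdecay : ∀ l : ℕ, l ≤ 2 →
      MemLp (fun x => (1 + x ^ 2) *
          iteratedDeriv l (fun y => ue y - Real.sign y * Real.sin (k₀ * y)) x) 2
        (volume.restrict {x : ℝ | 1 ≤ |x|})) :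
    Filter.Tendsto
      (fun z : ℝ => ∫ x in (-z)..z, Real.cos (k₀ * x) *
        (c ^ 2 * deriv (deriv ue) x - (ue (x + 1) - 2 * ue x + ue (x - 1)) + α * ue x))
      Filter.atTop (nhds (2 * c ^ 2 * k₀ - 2)) := by
  subst hk₀ hα
  set s : ℝ → ℝ := fun y => sin (π / 2 * y)
  set v : ℝ → ℝ := ue - s
  have hs : ContDiff ℝ 2 s := by fun_prop
  have hv : ContDiff ℝ 2 v := hue.sub hs
  have hweighted (l : ℕ) (hl : l ≤ 2) := memLp_weighted_iteratedDeriv_Ici (g := v)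
    (fun y (hy : 0 < y) => by simp [v, s, Real.sign_of_pos hy]) l (hdecay l hl)
  have h₀ := hweighted 0 (by norm_num)
  have h₁ := hweighted 1 (by norm_num)
  have h₂ := hweighted 2 le_rfl
  simp only [iteratedDeriv_zero, iteratedDeriv_one] at h₀ h₁
  rw [iteratedDeriv_succ, iteratedDeriv_one] at h₂
  have hflux : Tendsto (flux c (π / 2) v) atTop (𝓝 0) :=
    tendsto_flux_zero c (π / 2) hv.continuous
      (tendsto_zero_of_memLp_weighted (hv.of_le one_le_two) h₀ h₁)
      (tendsto_zero_of_memLp_weighted hv.deriv' h₁ h₂)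
      (tendsto_integral_abs_of_memLp_weighted hv.continuous h₀)
  have hlim := hflux.add_const (2 * c ^ 2 * (π / 2) - 2)
  rw [zero_add] at hlim
  refine hlim.congr fun z => ?_
  rw [integral_cos_mul_eq_flux cos_pi_div_two sin_pi_div_two c hue heven,
    show ue = v + s from (sub_add_cancel ue s).symm,
    flux_add c _ (hv.differentiable two_ne_zero) (hs.differentiable two_ne_zero),
    flux_sin_half_pi]
end
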